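/- For every positive integer i, the i-Fibonacci word f^[i] equals the characteristic Sturmian word of slope α = [0; i, 1, 1, 1, ...] (the continued fraction with partial quotients i followed by all 1's). -/

import Mathlib

open Filter

/-- The (n,i)-Fibonacci words: f_0^[i] = 0, f_1^[i] = 0^{i-1} 1, f_n^[i] = f_{n-1}^[i] f_{n-2}^[i]. -/
def genFibWord (i : ℕ) : ℕ → List ℕ
  | 0 => [0]
  | 1 => List.replicate (i - 1) 0 ++ [1]
  | n + 2 => genFibWord i (n + 1) ++ genFibWord i n

/-- The infinite i-Fibonacci word f^[i] (each f_n^[i] is a prefix of the next, and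
f_{n+2}^[i] has length > n, so the n-th symbol is that of f_{n+2}^[i]). -/
def iFibWord (i : ℕ) (n : ℕ) : ℕ := (genFibWord i (n + 2)).getD n 0

/-- Truncations of the tail continued fraction [0; 1, 1, 1, ...]. -/
noncomputable def onesTail : ℕ → ℝ
  | 0 => 0
  | n + 1 => 1 / (1 + onesTail n)

/-- The convergents of the continued fraction [0; i, 1, 1, 1, ...]. -/
noncomputable def cfConvergent (i : ℕ) (n : ℕ) : ℝ := 1 / (i + onesTail n)

set_option maxHeartbeats 1600000

noncomputable def gr : ℝ := (Real.sqrt 5 - 1)/2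

lemma gr_pos : 0 < gr := by
  have h : (2:ℝ) < Real.sqrt 5 := by
    rw [show (2:ℝ) = Real.sqrt 4 by rw [show (4:ℝ) = 2^2 by norm_num, Real.sqrt_sq]; norm_num]
    exact Real.sqrt_lt_sqrt (by norm_num) (by norm_num)
  unfold gr; linarith

lemma gr_lt : gr < 2/3 := by
  have h : Real.sqrt 5 < 7/3 := by
    rw [show (7/3:ℝ) = Real.sqrt ((7/3)^2) by rw [Real.sqrt_sq]; norm_num]
    exact Real.sqrt_lt_sqrt (by norm_num) (by norm_num)
  unfold gr; linarith

lemma gr_lt_one : gr < 1 := lt_trans gr_lt (by norm_num)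

lemma gr_sq : gr^2 = 1 - gr := by
  have h : Real.sqrt 5 ^ 2 = 5 := Real.sq_sqrt (by norm_num)
  unfold gr; nlinarith

lemma gr_half : 1/2 < gr := by nlinarith [gr_sq, gr_lt_one, gr_pos]

noncomputable def aa (i : ℕ) : ℝ := 1/(i + gr)

lemma igr_pos (i : ℕ) : 0 < (i:ℝ) + gr := by
  have : (0:ℝ) ≤ i := Nat.cast_nonneg i
  linarith [gr_pos]

lemma aa_pos (i : ℕ) : 0 < aa i := by
  unfold aa; exact one_div_pos.mpr (igr_pos i)

lemma aa_mul (i : ℕ) : ((i:ℝ) + gr) * aa i = 1 := by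
  unfold aa; field_simp [ne_of_gt (igr_pos i)]

lemma aa_le_gr (i : ℕ) (hi : 1 ≤ i) : aa i ≤ gr := by
  have h1 : (1:ℝ) ≤ i := by exact_mod_cast hi
  have h := aa_mul i
  have hg := gr_sq
  have ha := aa_pos i
  nlinarith [gr_pos]

def qseq (i : ℕ) : ℕ → ℕ
  | 0 => 1
  | 1 => i
  | n+2 => qseq i (n+1) + qseq i n

def pseq : ℕ → ℕ
  | 0 => 0
  | 1 => 1
  | n+2 => pseq (n+1) + pseq n

lemma q_a (i : ℕ) : ∀ n, (qseq i n : ℝ) * aa i = pseq n + (-gr)^n * aa i := by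
  intro n
  induction n using Nat.strong_induction_on with
  | _ n ih =>
    match n with
    | 0 => simp [qseq, pseq]
    | 1 =>
      have h := aa_mul i
      simp only [qseq, pseq]
      push_cast
      nlinarith []
    | (k+2) =>
      have h1 := ih (k+1) (by omega)
      have h2 := ih k (by omega)
      have hpow : (-gr)^(k+2) = (-gr)^(k+1) + (-gr)^k := by
        have : (-gr)^(k+2) = (-gr)^k * gr^2 := by ring
        rw [this, gr_sq]; ring
      simp only [qseq, pseq]
      push_cast
      rw [add_mul, h1, h2, hpow]
      ring

lemma claimC (i : ℕ) (hi : 1 ≤ i) : ∀ n, 1 ≤ n → ∀ m : ℕ, 1 ≤ m → m ≤ qseq i n →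
    gr^n * aa i ≤ Int.fract ((m:ℝ) * aa i) ∧ Int.fract ((m:ℝ) * aa i) ≤ 1 - gr^n * aa i := by
  intro n
  induction n using Nat.strong_induction_on with
  | _ n ih =>
    have ha := aa_pos i
    have hag := aa_le_gr i hi
    have hia : (i:ℝ) * aa i = 1 - gr * aa i := by have := aa_mul i; linarith [aa_mul i]; 
    match n with
    | 1 =>
      intro _ m hm1 hm2
      have hm2' : (m:ℝ) ≤ i := by exact_mod_cast (by simpa [qseq] using hm2)
      have hm1' : (1:ℝ) ≤ m := by exact_mod_cast hm1
      have hma : (m:ℝ) * aa i ≤ 1 - gr * aa i := by nlinarith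
      have hma0 : aa i ≤ (m:ℝ) * aa i := by nlinarith
      have hfr : Int.fract ((m:ℝ) * aa i) = (m:ℝ) * aa i := by
        rw [Int.fract_eq_self]
        constructor <;> nlinarith [gr_pos]
      rw [hfr]
      constructor <;> nlinarith [gr_pos, gr_lt_one]
    | 2 =>
      intro _ m hm1 hm2
      have hm2' : m ≤ i + 1 := by simpa [qseq] using hm2
      have hm1' : (1:ℝ) ≤ m := by exact_mod_cast hm1
      have hg2 : gr^2 = 1 - gr := gr_sq
      rcases Nat.lt_or_ge m (i+1) with hlt | hge
      · -- m ≤ i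
        have hm2'' : (m:ℝ) ≤ i := by exact_mod_cast (by omega : m ≤ i)
        have hma : (m:ℝ) * aa i ≤ 1 - gr * aa i := by nlinarith
        have hfr : Int.fract ((m:ℝ) * aa i) = (m:ℝ) * aa i := by
          rw [Int.fract_eq_self]
          constructor <;> nlinarith [gr_pos]
        rw [hfr]
        constructor <;> nlinarith [gr_pos, gr_lt_one]
      · -- m = i + 1
        have hme : m = i + 1 := by omega
        subst hme
        have hval : ((i+1:ℕ):ℝ) * aa i = 1 + gr^2 * aa i := by
          push_cast
          nlinarith [aa_mul i]
        have hfr : Int.fract (((i+1:ℕ):ℝ) * aa i) = gr^2 * aa i := by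
          rw [hval, show (1:ℝ) + gr^2 * aa i = gr^2 * aa i + (1:ℕ) by push_cast; ring,
            Int.fract_add_natCast, Int.fract_eq_self]
          constructor <;> nlinarith [gr_pos, gr_lt_one]
        rw [hfr]
        constructor
        · linarith
        · nlinarith [gr_pos, gr_lt, gr_half]
    | 0 => intro h; omega
    | (k+3) =>
      intro _ m hm1 hm2
      have hq : qseq i (k+3) = qseq i (k+2) + qseq i (k+1) := rfl
      obtain ⟨B, hB⟩ : ∃ B : ℝ, gr^(k+1) * aa i = B := ⟨_, rfl⟩
      have hBpos : 0 < B := hB ▸ mul_pos (pow_pos gr_pos _) ha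
      have e2 : gr^(k+2) * aa i = B * gr := by rw [← hB, pow_succ]; ring
      have e3 : gr^(k+3) * aa i = B - B * gr := by
        have h' : gr^(k+3) * aa i = (gr^(k+1) * aa i) * gr^2 := by ring
        rw [h', gr_sq, hB]; ring
      have hCB : B * gr < B := by nlinarith [gr_lt_one]
      have hCpos : 0 < B * gr := mul_pos hBpos gr_pos
      rw [e3]
      rcases Nat.lt_or_ge (qseq i (k+2)) m with hgt | hle
      · obtain ⟨r, hmr⟩ : ∃ r, m = qseq i (k+2) + r := ⟨m - qseq i (k+2), by omega⟩
        have hr1 : 1 ≤ r := by omega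
        have hr2 : r ≤ qseq i (k+1) := by omega
        obtain ⟨hfl, hfu⟩ := ih (k+1) (by omega) (by omega) r hr1 hr2
        rw [hB] at hfl hfu
        obtain ⟨f, hf⟩ : ∃ f : ℝ, Int.fract ((r:ℝ) * aa i) = f := ⟨_, rfl⟩
        rw [hf] at hfl hfu
        obtain ⟨d, hd⟩ : ∃ d : ℝ, (-gr)^(k+2) * aa i = d := ⟨_, rfl⟩
        have hfr0 : Int.fract ((m:ℝ) * aa i) = Int.fract (f + d) := by
          rw [hmr]
          push_cast
          rw [add_mul, q_a i (k+2),
            show (r:ℝ)*aa i = (⌊(r:ℝ)*aa i⌋:ℝ) + f by rw [← hf, Int.fract]; ring]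
          rw [show (↑(pseq (k+2)) + (-gr)^(k+2)*aa i) + ((⌊(r:ℝ)*aa i⌋:ℝ) + f) =
            (↑⌊(r:ℝ)*aa i⌋ + (f + d)) + ((pseq (k+2) : ℕ) : ℝ) by rw [← hd]; push_cast; ring]
          rw [Int.fract_add_natCast, Int.fract_intCast_add]
        rw [hfr0]
        rcases Nat.even_or_odd (k+2) with hev | hod
        · have hde : d = B * gr := by rw [← hd, hev.neg_pow, e2]
          rw [hde] at *
          rw [Int.fract_eq_self.mpr ⟨by linarith, by linarith⟩]
          constructor <;> linarith
        · have hde : d = -(B * gr) := by rw [← hd, hod.neg_pow, neg_mul, e2]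
          rw [hde] at *
          rw [Int.fract_eq_self.mpr ⟨by linarith, by linarith⟩]
          constructor <;> linarith
      · obtain ⟨hl, hu⟩ := ih (k+2) (by omega) (by omega) m hm1 hle
        rw [e2] at hl hu
        have hkey : B - B * gr ≤ B * gr := by nlinarith [gr_half, hBpos]
        constructor <;> linarith

lemma floor_shift (x d : ℝ) (h1 : 0 ≤ Int.fract x + d) (h2 : Int.fract x + d < 1) :
    ⌊x + d⌋ = ⌊x⌋ := by
  have hx : x + d = (⌊x⌋:ℝ) + (Int.fract x + d) := by
    have := Int.floor_add_fract x
    linarith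
  rw [hx, Int.floor_intCast_add, Int.floor_eq_zero_iff.mpr ⟨h1, h2⟩, add_zero]

lemma shiftLemma (i : ℕ) (hi : 1 ≤ i) (n : ℕ) (m : ℕ) (hm1 : 1 ≤ m)
    (hm2 : m ≤ qseq i (n+1) + 1) :
    ⌊((m:ℝ) + (qseq i (n+2) : ℕ)) * aa i⌋ = ⌊(m:ℝ) * aa i⌋ + pseq (n+2) := by
  have ha := aa_pos i
  have hag := aa_le_gr i hi
  obtain ⟨P, hP⟩ : ∃ P : ℝ, gr^(n+1) * aa i = P := ⟨_, rfl⟩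
  have hPpos : 0 < P := hP ▸ mul_pos (pow_pos gr_pos _) ha
  have eP2 : gr^(n+2) * aa i = P * gr := by rw [← hP, pow_succ]; ring
  have hPg : P * gr < P := by nlinarith [gr_lt_one]
  have hPgpos : 0 < P * gr := mul_pos hPpos gr_pos
  have hPa : P < aa i := by
    rw [← hP]
    have h1 : gr^(n+1) < 1 := pow_lt_one₀ (le_of_lt gr_pos) gr_lt_one (by omega)
    nlinarith
  obtain ⟨d, hd⟩ : ∃ d : ℝ, (-gr)^(n+2) * aa i = d := ⟨_, rfl⟩
  have hdcase : d = P * gr ∨ d = -(P * gr) := by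
    rcases Nat.even_or_odd (n+2) with hev | hod
    · left; rw [← hd, hev.neg_pow, eP2]
    · right; rw [← hd, hod.neg_pow, neg_mul, eP2]
  have hbound : 0 ≤ Int.fract ((m:ℝ) * aa i) + d ∧ Int.fract ((m:ℝ) * aa i) + d < 1 := by
    rcases Nat.lt_or_ge (qseq i (n+1)) m with hgt | hle
    · -- m = qseq i (n+1) + 1
      have hme : m = qseq i (n+1) + 1 := by omega
      have hma : (m:ℝ) * aa i = ((-gr)^(n+1) * aa i + aa i) + (pseq (n+1) : ℕ) := by
        rw [hme]; push_cast
        rw [add_mul, q_a i (n+1)]; ring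
      rcases Nat.even_or_odd (n+1) with hev | hod
      · -- fract = P + aa i ; d = -(P*gr)
        have hn2 : 2 ≤ n+1 := by rcases hev with ⟨k, hk⟩; omega
        have hPle : P ≤ gr^2 * aa i := by
          rw [← hP]
          have : gr^(n+1) ≤ gr^2 :=
            pow_le_pow_of_le_one (le_of_lt gr_pos) (le_of_lt gr_lt_one) hn2
          exact mul_le_mul_of_nonneg_right this (le_of_lt ha)
        have hlt1 : P + aa i < 1 := by nlinarith [gr_sq, gr_lt]
        have hfr : Int.fract ((m:ℝ) * aa i) = P + aa i := by
          rw [hma, Int.fract_add_natCast, hev.neg_pow, hP, Int.fract_eq_self.mpr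
            ⟨by positivity, hlt1⟩]
        have hde : d = -(P * gr) := by
          have hod2 : Odd (n+2) := Even.add_one hev
          rw [← hd, hod2.neg_pow, neg_mul, eP2]
        rw [hfr, hde]
        constructor <;> linarith [gr_lt_one]
      · -- fract = aa i - P ; d = P*gr
        have hfr : Int.fract ((m:ℝ) * aa i) = aa i - P := by
          rw [hma, Int.fract_add_natCast, hod.neg_pow, neg_mul, hP, Int.fract_eq_self.mpr
            ⟨by linarith, by nlinarith [gr_lt_one]⟩]
          ring
        have hde : d = P * gr := by
          have hev2 : Even (n+2) := Odd.add_one hod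
          rw [← hd, hev2.neg_pow, eP2]
        rw [hfr, hde]
        constructor <;> linarith [gr_lt_one]
    · obtain ⟨hl, hu⟩ := claimC i hi (n+1) (by omega) m hm1 hle
      rw [hP] at hl hu
      rcases hdcase with hde | hde <;> rw [hde] <;> constructor <;> linarith
  have key : ⌊(m:ℝ) * aa i + d⌋ = ⌊(m:ℝ) * aa i⌋ :=
    floor_shift _ _ hbound.1 hbound.2
  calc ⌊((m:ℝ) + (qseq i (n+2):ℕ)) * aa i⌋
      = ⌊((m:ℝ) * aa i + d) + (pseq (n+2) : ℕ)⌋ := by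
        rw [add_mul, q_a i (n+2)]
        congr 1
        rw [← hd]; push_cast; ring
    _ = ⌊(m:ℝ) * aa i + d⌋ + pseq (n+2) := by rw [Int.floor_add_natCast]
    _ = ⌊(m:ℝ) * aa i⌋ + pseq (n+2) := by rw [key]

lemma lenGF (i : ℕ) (hi : 1 ≤ i) : ∀ n, (genFibWord i n).length = qseq i n := by
  intro n
  induction n using Nat.strong_induction_on with
  | _ n ih =>
    match n with
    | 0 => simp [genFibWord, qseq]
    | 1 => simp [genFibWord, qseq]; omega
    | (k+2) =>
      show (genFibWord i (k+1) ++ genFibWord i k).length = qseq i (k+1) + qseq i k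
      rw [List.length_append, ih (k+1) (by omega), ih k (by omega)]

lemma qseq_pos (i : ℕ) (hi : 1 ≤ i) : ∀ n, 1 ≤ qseq i n := by
  intro n
  induction n using Nat.strong_induction_on with
  | _ n ih =>
    match n with
    | 0 => exact le_refl 1
    | 1 => exact hi
    | (k+2) => have := ih (k+1) (by omega); show 1 ≤ qseq i (k+1) + qseq i k; omega

lemma qseq_gt (i : ℕ) (hi : 1 ≤ i) : ∀ n, n < qseq i (n+2) := by
  intro n
  induction n with
  | zero =>
    have h1 := qseq_pos i hi 1
    show 0 < qseq i 1 + qseq i 0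
    omega
  | succ k ih =>
    have h1 := qseq_pos i hi (k+1)
    show k+1 < qseq i (k+2) + qseq i (k+1)
    omega

lemma claimA (i : ℕ) (hi : 1 ≤ i) : ∀ n, 1 ≤ n → ∀ m, m < qseq i n →
    ((genFibWord i n).getD m 0 : ℤ) = ⌊((m:ℝ)+2) * aa i⌋ - ⌊((m:ℝ)+1) * aa i⌋ := by
  have ha := aa_pos i
  have hag := aa_le_gr i hi
  have hia : (i:ℝ) * aa i = 1 - gr * aa i := by linarith [aa_mul i]
  intro n
  induction n using Nat.strong_induction_on with
  | _ n ih =>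
    have e1 : ((i:ℝ)+1) * aa i = 1 + (1-gr) * aa i := by linear_combination aa_mul i
    have e2 : ((i:ℝ)+2) * aa i = 1 + (2-gr) * aa i := by linear_combination aa_mul i
    have hgr1 : (0:ℝ) ≤ 1 - gr := by linarith [gr_lt_one]
    have hgr2 : (0:ℝ) ≤ 2 - gr := by linarith [gr_lt_one]
    have hb1 : (1-gr) * aa i < 1 := by
      nlinarith [mul_le_mul_of_nonneg_left hag hgr1, gr_sq, gr_lt]
    have hb2 : (2-gr) * aa i < 1 := by
      nlinarith [mul_le_mul_of_nonneg_left hag hgr2, gr_sq, gr_lt]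
    have hp1 : (0:ℝ) ≤ (1-gr) * aa i := mul_nonneg hgr1 (le_of_lt ha)
    have hp2 : (0:ℝ) ≤ (2-gr) * aa i := mul_nonneg hgr2 (le_of_lt ha)
    have hfe1 : ⌊((i:ℝ)+1) * aa i⌋ = 1 := by
      rw [e1, show (1:ℝ) + (1-gr)*aa i = (1-gr)*aa i + ((1:ℕ):ℝ) by push_cast; ring,
        Int.floor_add_natCast, Int.floor_eq_zero_iff.mpr ⟨hp1, hb1⟩]
      norm_num
    have hfe2 : ⌊((i:ℝ)+2) * aa i⌋ = 1 := by
      rw [e2, show (1:ℝ) + (2-gr)*aa i = (2-gr)*aa i + ((1:ℕ):ℝ) by push_cast; ring,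
        Int.floor_add_natCast, Int.floor_eq_zero_iff.mpr ⟨hp2, hb2⟩]
      norm_num
    match n with
    | 0 => intro h; omega
    | 1 =>
      intro _ m hm
      have hmq : m < i := by simpa [qseq] using hm
      have hmr : ((m:ℝ)+1) * aa i < 1 := by
        have h2 : (m:ℝ) + 1 ≤ i := by exact_mod_cast Nat.succ_le_of_lt hmq
        nlinarith [mul_pos gr_pos ha]
      have hmpos : 0 < ((m:ℝ)+1) * aa i := by positivity
      have hf1 : ⌊((m:ℝ)+1) * aa i⌋ = 0 :=
        Int.floor_eq_zero_iff.mpr ⟨le_of_lt hmpos, hmr⟩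
      rcases Nat.lt_or_ge m (i-1) with hlt | hge
      · -- symbol 0
        have hget : (genFibWord i 1).getD m 0 = 0 := by
          show (List.replicate (i-1) 0 ++ [1]).getD m 0 = 0
          rw [List.getD_append _ _ _ _ (by simpa using hlt),
            List.getD_eq_getElem _ _ (by simpa using hlt), List.getElem_replicate]
        have hm2r : ((m:ℝ)+2) * aa i < 1 := by
          have h2 : (m:ℝ) + 2 ≤ i := by
            have : m + 2 ≤ i := by omega
            exact_mod_cast this
          nlinarith [mul_pos gr_pos ha]
        have hf2 : ⌊((m:ℝ)+2) * aa i⌋ = 0 :=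
          Int.floor_eq_zero_iff.mpr ⟨by positivity, hm2r⟩
        rw [hget, hf1, hf2]; simp
      · -- m = i - 1, symbol 1
        have hme : m = i - 1 := by omega
        have hget : (genFibWord i 1).getD m 0 = 1 := by
          show (List.replicate (i-1) 0 ++ [1]).getD m 0 = 1
          rw [List.getD_append_right _ _ _ _ (by simpa using hge)]
          simp [hme]
        have hm2e : (m:ℝ) + 2 = (i:ℝ) + 1 := by
          have : ((m:ℕ):ℝ) = (i:ℝ) - 1 := by
            rw [hme, Nat.cast_sub hi]; simp
          rw [this]; ring
        have hf2 : ⌊((m:ℝ)+2) * aa i⌋ = 1 := by rw [hm2e, hfe1]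
        rw [hget, hf2, hf1]; simp
    | 2 =>
      intro _ m hm
      have hmq : m < i + 1 := by simpa [qseq] using hm
      rcases Nat.lt_or_ge m i with hlt | hge
      · -- in the left part
        have hlen : (genFibWord i 1).length = i := lenGF i hi 1
        have hget : (genFibWord i 2).getD m 0 = (genFibWord i 1).getD m 0 := by
          show (genFibWord i 1 ++ genFibWord i 0).getD m 0 = _
          rw [List.getD_append _ _ _ _ (by omega)]
        rw [hget]
        exact ih 1 (by omega) (by omega) m (by simpa [qseq] using hlt)
      · -- m = i : symbol 0 from f_0
        have hme : m = i := by omega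
        have hlen : (genFibWord i 1).length = i := lenGF i hi 1
        have hget : (genFibWord i 2).getD m 0 = 0 := by
          show (genFibWord i 1 ++ genFibWord i 0).getD m 0 = 0
          rw [List.getD_append_right _ _ _ _ (by omega)]
          simp [genFibWord, hme, hlen]
        have h1 : ⌊((m:ℝ)+1) * aa i⌋ = 1 := by
          rw [hme]; push_cast; exact_mod_cast hfe1
        have h2 : ⌊((m:ℝ)+2) * aa i⌋ = 1 := by
          rw [hme]; push_cast; exact_mod_cast hfe2
        rw [hget, h1, h2]; simp
    | (k+3) =>
      intro _ m hm
      have hq3 : qseq i (k+3) = qseq i (k+2) + qseq i (k+1) := rfl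
      have hlen : (genFibWord i (k+2)).length = qseq i (k+2) := lenGF i hi (k+2)
      rcases Nat.lt_or_ge m (qseq i (k+2)) with hlt | hge
      · have hget : (genFibWord i (k+3)).getD m 0 = (genFibWord i (k+2)).getD m 0 := by
          show (genFibWord i (k+2) ++ genFibWord i (k+1)).getD m 0 = _
          rw [List.getD_append _ _ _ _ (by omega)]
        rw [hget]
        exact ih (k+2) (by omega) (by omega) m hlt
      · obtain ⟨j, hj⟩ : ∃ j, m = qseq i (k+2) + j := ⟨m - qseq i (k+2), by omega⟩
        have hjq : j < qseq i (k+1) := by omega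
        have hget : (genFibWord i (k+3)).getD m 0 = (genFibWord i (k+1)).getD j 0 := by
          show (genFibWord i (k+2) ++ genFibWord i (k+1)).getD m 0 = _
          rw [List.getD_append_right _ _ _ _ (by omega)]
          congr 1; omega
        have hs1 := shiftLemma i hi k (j+1) (by omega) (by omega)
        have hs2 := shiftLemma i hi k (j+2) (by omega) (by omega)
        have hc1 : ((m:ℝ)+1) = ((j+1:ℕ):ℝ) + (qseq i (k+2):ℕ) := by
          rw [hj]; push_cast; ring
        have hc2 : ((m:ℝ)+2) = ((j+2:ℕ):ℝ) + (qseq i (k+2):ℕ) := by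
          rw [hj]; push_cast; ring
        rw [hget, hc1, hc2, hs1, hs2]
        have := ih (k+1) (by omega) (by omega) j hjq
        push_cast at this ⊢
        linarith [this]

lemma onesTail_nonneg : ∀ n, 0 ≤ onesTail n := by
  intro n
  cases n with
  | zero => exact le_refl 0
  | succ k =>
    show 0 ≤ 1 / (1 + onesTail k)
    have := onesTail_nonneg k
    positivity

lemma onesTail_dist : ∀ n, |onesTail n - gr| ≤ gr^n := by
  intro n
  induction n with
  | zero =>
    show |0 - gr| ≤ 1
    rw [abs_of_nonpos (by linarith [gr_pos])]
    linarith [gr_pos, gr_lt_one]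
  | succ k ih =>
    have hnn := onesTail_nonneg k
    have h1h : (0:ℝ) < 1 + onesTail k := by linarith
    have h1g : (0:ℝ) < 1 + gr := by linarith [gr_pos]
    have hgr_eq : gr * (1+gr) = 1 := by nlinarith [gr_sq]
    have hdiff : onesTail (k+1) - gr = (gr - onesTail k) / ((1 + onesTail k) * (1 + gr)) := by
      show 1/(1 + onesTail k) - gr = _
      rw [div_sub' (ne_of_gt h1h), div_eq_div_iff (ne_of_gt h1h) (by positivity)]
      ring_nf
      nlinarith [gr_sq]
    rw [hdiff, abs_div, abs_sub_comm gr, abs_of_pos (mul_pos h1h h1g)]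
    have hden : gr * ((1 + onesTail k) * (1 + gr)) ≥ 1 := by nlinarith [gr_pos]
    rw [div_le_iff₀ (by positivity), pow_succ]
    calc |onesTail k - gr| ≤ gr^k := ih
    _ = gr^k * 1 := by ring
    _ ≤ gr^k * (gr * ((1 + onesTail k) * (1 + gr))) := by
        apply mul_le_mul_of_nonneg_left hden (pow_nonneg (le_of_lt gr_pos) k)
    _ = gr^k * gr * ((1 + onesTail k) * (1 + gr)) := by ring
  termination_by n => n

lemma tendsto_onesTail : Tendsto onesTail atTop (nhds gr) := by
  have h0 : Tendsto (fun n => onesTail n - gr) atTop (nhds 0) :=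
    squeeze_zero_norm onesTail_dist
      (tendsto_pow_atTop_nhds_zero_of_lt_one (le_of_lt gr_pos) gr_lt_one)
  have := h0.add_const gr
  simpa using this

lemma tendsto_cf (i : ℕ) : Tendsto (cfConvergent i) atTop (nhds (aa i)) := by
  have h1 : Tendsto (fun n => (i:ℝ) + onesTail n) atTop (nhds ((i:ℝ) + gr)) :=
    tendsto_const_nhds.add tendsto_onesTail
  have h2 := (tendsto_const_nhds (x := (1:ℝ))).div h1 (ne_of_gt (igr_pos i))
  exact h2

/-- The i-Fibonacci word is the characteristic word of slope α = [0; i, 1, 1, 1, ...]: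
its n-th symbol (1-indexed) is ⌊(n+1)α⌋ - ⌊nα⌋. -/
theorem stmt_7 (i : ℕ) (hi : 1 ≤ i) (α : ℝ)
    (hα : Tendsto (cfConvergent i) atTop (nhds α)) :
    ∀ n : ℕ, 1 ≤ n →
      (iFibWord i (n - 1) : ℤ) = ⌊((n : ℝ) + 1) * α⌋ - ⌊(n : ℝ) * α⌋ := by
  have hval : α = aa i := tendsto_nhds_unique hα (tendsto_cf i)
  subst hval
  intro n hn
  have hkey := claimA i hi ((n-1)+2) (by omega) (n-1) (qseq_gt i hi (n-1))
  have hc : ((n-1:ℕ):ℝ) = (n:ℝ) - 1 := by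
    rw [Nat.cast_sub hn]; simp
  rw [hc] at hkey
  have e1 : ((n:ℝ)-1+2) = (n:ℝ)+1 := by ring
  have e2 : ((n:ℝ)-1+1) = (n:ℝ) := by ring
  rw [e1, e2] at hkey
  exact hkey
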